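/- arXiv:2203.05350 — 2 statements merged into one kernel-verified Lean document; each statement's English description precedes it below -/
import Mathlib

section
/- The Wronskian of the sequences (P_n(z)) and (Φ_n(z)) is constant and equals 𝔉(z): for every n ≥ 0 and every z ∈ ℂ, α_n ( P_n(z) Φ_{n+1}(z) − P_{n+1}(z) Φ_n(z) ) = 𝔉(z), where Φ_n(z) = (−1)^n k^{−n} 𝔚_n(z). -/
open scoped BigOperators

noncomputable def alph (a : ℕ → ℝ) (k : ℝ) (n : ℕ) : ℝ := k * a n

noncomputable def bet (a : ℕ → ℝ) (k : ℝ) : ℕ → ℝ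
  | 0 => a 0
  | n + 1 => a (n + 1) + k ^ 2 * a n

noncomputable def gapPow (k : ℝ) (m : ℕ) (j : Fin m → ℕ) : ℝ :=
  ∏ i : Fin m,
    (1 - k ^ (2 * (j i + 1 -
      (if (i : ℕ) = 0 then 0
       else j ⟨(i : ℕ) - 1, Nat.lt_of_le_of_lt (Nat.sub_le _ _) i.isLt⟩ + 1))))

noncomputable def cC (a : ℕ → ℝ) (k : ℝ) (m : ℕ) : ℝ :=
  ∑' j : {j : Fin m → ℕ // StrictMono j},
    gapPow k m j.1 / ((1 - k ^ 2) ^ m * ∏ i : Fin m, a (j.1 i))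

noncomputable def Fgt (a : ℕ → ℝ) (k : ℝ) (z : ℂ) : ℂ :=
  1 + ∑' m : ℕ, (-1 : ℂ) ^ (m + 1) * (cC a k (m + 1) : ℂ) * z ^ (m + 1)

noncomputable def dC (a : ℕ → ℝ) (k : ℝ) (n m : ℕ) : ℝ :=
  ∑' j : {j : Fin (m + 1) → ℕ // StrictMono j ∧ n ≤ j 0},
    (k ^ (2 * j.1 0) *
      ∏ i : Fin m, (1 - k ^ (2 * (j.1 i.succ - j.1 i.castSucc)))) /
      ((1 - k ^ 2) ^ m * ∏ i : Fin (m + 1), a (j.1 i))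

noncomputable def Wgt (a : ℕ → ℝ) (k : ℝ) (n : ℕ) (z : ℂ) : ℂ :=
  ∑' m : ℕ, (-1 : ℂ) ^ m * (dC a k n m : ℂ) * z ^ m

noncomputable def Phi (a : ℕ → ℝ) (k : ℝ) (n : ℕ) (z : ℂ) : ℂ :=
  (-1 : ℂ) ^ n * ((k : ℂ) ^ n)⁻¹ * Wgt a k n z


/-!
`P` and `Φ` satisfy the same three-term recurrence for `n ≥ 1`, so their Wronskian
`α_n (P_n Φ_{n+1} − P_{n+1} Φ_n)` does not depend on `n`: it suffices to evaluate it at `n = 0`.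

Let `c_{n,m}` be `c_m` with the indices restricted to `j₁ ≥ n` and first factor
`1 − k^{2(j₁+1−n)}`, and `𝔉_n(z) = Σ (−1)^m c_{n,m} z^m`, so that `𝔉_0 = 𝔉`. Splitting off
the term `j₀ = n` of `d_{n,m}` gives `a_n (𝔚_n − 𝔚_{n+1}) = k^{2n} 𝔉_{n+1}`. Splitting
`c_{n,m+1}` by its first index and telescoping the first gap factor,
`k^{2n}(k^{2(t−n)} − k^{2(t+1−n)}) = k^{2t}(1 − k²)`, gives `k^{2n} (𝔉_n − 𝔉_{n+1}) = −z 𝔚_n`.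
Eliminating `𝔉_{n+1}, 𝔉_{n+2}` yields the recurrence of `𝔚_n`, hence of `Φ_n`, and at `n = 0`
the value `𝔉`.

The multiple sums are manipulated in `ℝ≥0∞`, where no summability is needed; the bounds
`c_{n,m} ≤ S^m / m!` and `d_{n,m} ≤ S^{m+1} / (m+1)!`, with `S = Σ_j 1 / ((1 − k²) a_j)`,
make them finite and all the power series entire.
-/
open scoped ENNReal Nat

theorem wronskian_eq_of_three_term_recurrence {R : Type*} [CommRing R] {α γ P Q : ℕ → R}
    (hP : ∀ n, α (n + 1) * P (n + 2) + γ (n + 1) * P (n + 1) + α n * P n = 0)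
    (hQ : ∀ n, α (n + 1) * Q (n + 2) + γ (n + 1) * Q (n + 1) + α n * Q n = 0) (n : ℕ) :
    α n * (P n * Q (n + 1) - P (n + 1) * Q n) = α 0 * (P 0 * Q 1 - P 1 * Q 0) := by
  induction n with
  | zero => rfl
  | succ n ih => linear_combination ih + P (n + 1) * hQ n - Q (n + 1) * hP n

namespace ENNReal

theorem tsum_ite_le_eq_add (f : ℕ → ℝ≥0∞) (n : ℕ) :
    ∑' t, (if n ≤ t then f t else 0) = f n + ∑' t, if n + 1 ≤ t then f t else 0 := by
  rw [ENNReal.tsum_eq_add_tsum_ite n, if_pos le_rfl]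
  congr 1
  refine tsum_congr fun t => ?_
  split_ifs <;> first | rfl | omega

theorem tsum_ite_le_le_of_add_le {c u : ℕ → ℝ≥0∞} {n : ℕ}
    (h : ∀ t, n ≤ t → c t + u (t + 1) ≤ u t) : ∑' t, (if n ≤ t then c t else 0) ≤ u n := by
  have partial_le : ∀ N, ∑ s ∈ Finset.range N, c (n + s) + u (n + N) ≤ u n := by
    intro N
    induction N with
    | zero => simp
    | succ N ih =>
      calc ∑ s ∈ Finset.range (N + 1), c (n + s) + u (n + (N + 1))
          = ∑ s ∈ Finset.range N, c (n + s) + (c (n + N) + u (n + N + 1)) := by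
            rw [Finset.sum_range_succ, add_assoc, add_assoc]
        _ ≤ ∑ s ∈ Finset.range N, c (n + s) + u (n + N) := by gcongr; exact h _ le_self_add
        _ ≤ u n := ih
  have shift : ∑' t, (if n ≤ t then c t else 0) = ∑' s, c (n + s) := by
    rw [← (add_right_injective n).tsum_eq]
    · simp
    · intro t ht
      simp only [Function.mem_support, ne_eq, ite_eq_right_iff, not_forall] at ht
      exact ⟨t - n, Nat.add_sub_cancel' ht.1⟩
  rw [shift]
  exact ENNReal.tsum_le_of_sum_range_le fun N => le_self_add.trans (partial_le N)

theorem tsum_fin_succ_eq_tsum_tsum {m : ℕ} (F : ℕ → (Fin m → ℕ) → ℝ≥0∞) :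
    ∑' j : Fin (m + 1) → ℕ, F (j 0) (Fin.tail j) = ∑' t, ∑' j, F t j := by
  rw [← (Fin.consEquiv fun _ => ℕ).tsum_eq, ENNReal.tsum_prod']
  rfl

end ENNReal

theorem tsum_subtype_eq_toReal_tsum {ι : Type*} {p : ι → Prop} [DecidablePred p] {f : ι → ℝ}
    {F : ι → ℝ≥0∞}
    (hF : ∀ i, F i = if p i then ENNReal.ofReal (f i) else 0) (hf : ∀ i, p i → 0 ≤ f i) :
    ∑' x : {i // p i}, f x = (∑' i, F i).toReal := by
  rw [ENNReal.tsum_toReal_eq fun i => by rw [hF]; split_ifs <;> simp]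
  refine (tsum_subtype {i | p i} f).trans (tsum_congr fun i => ?_)
  rw [hF]
  by_cases hi : p i
  · rw [if_pos hi, Set.indicator_of_mem (s := {i | p i}) hi, ENNReal.toReal_ofReal (hf i hi)]
  · rw [if_neg hi, Set.indicator_of_notMem (s := {i | p i}) hi, ENNReal.toReal_zero]

/-- `chainPrev n j i` is the least value allowed for `j i` in a chain `n ≤ j 0 < j 1 < ⋯`. -/
def chainPrev (n : ℕ) {m : ℕ} (j : Fin m → ℕ) (i : Fin m) : ℕ :=
  if (i : ℕ) = 0 then n else j ⟨(i : ℕ) - 1, Nat.lt_of_le_of_lt (Nat.sub_le _ _) i.isLt⟩ + 1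

section ChainSum

variable {m : ℕ}

@[simp]
theorem chainPrev_zero (n : ℕ) (j : Fin (m + 1) → ℕ) : chainPrev n j 0 = n := rfl

@[simp]
theorem chainPrev_succ (n : ℕ) (j : Fin (m + 1) → ℕ) (i : Fin m) :
    chainPrev n j i.succ = j i.castSucc + 1 := rfl

theorem chainPrev_tail (j : Fin (m + 1) → ℕ) (i : Fin m) :
    chainPrev (j 0 + 1) (Fin.tail j) i = j i.castSucc + 1 := by
  rcases i with ⟨_ | v, hv⟩ <;> rfl

theorem chainPrev_le_iff_strictMono (j : Fin (m + 1) → ℕ) (n : ℕ) :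
    (∀ i, chainPrev n j i ≤ j i) ↔ n ≤ j 0 ∧ StrictMono j := by
  rw [Fin.forall_fin_succ, Fin.strictMono_iff_lt_succ]
  simp only [chainPrev_zero, chainPrev_succ, Nat.add_one_le_iff]

variable (g : ℕ → ℕ → ℝ≥0∞)

/-- For a kernel `g` vanishing when `p > t`, a sum over the chains `n ≤ j 0 < ⋯ < j (m - 1)`. -/
noncomputable def chainSum (n m : ℕ) : ℝ≥0∞ :=
  ∑' j : Fin m → ℕ, ∏ i, g (chainPrev n j i) (j i)

@[simp]
theorem chainSum_zero (n : ℕ) : chainSum g n 0 = 1 := by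
  simp [chainSum]

theorem chainSum_succ (n m : ℕ) :
    chainSum g n (m + 1) = ∑' t, g n t * chainSum g (t + 1) m := by
  have split (j : Fin (m + 1) → ℕ) : ∏ i, g (chainPrev n j i) (j i)
      = g n (j 0) * ∏ i, g (chainPrev (j 0 + 1) (Fin.tail j) i) (Fin.tail j i) := by
    simp only [Fin.prod_univ_succ, chainPrev_zero, chainPrev_succ, chainPrev_tail]
    rfl
  simp only [chainSum, split, ← ENNReal.tsum_mul_left]
  exact ENNReal.tsum_fin_succ_eq_tsum_tsum
    (fun t j => g n t * ∏ i, g (chainPrev (t + 1) j i) (j i))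

noncomputable def tailSum (b : ℕ → ℝ≥0∞) (n : ℕ) : ℝ≥0∞ :=
  ∑' t, if n ≤ t then b t else 0

theorem tailSum_eq_add (b : ℕ → ℝ≥0∞) (n : ℕ) : tailSum b n = b n + tailSum b (n + 1) :=
  ENNReal.tsum_ite_le_eq_add b n

/-- Summing `c t * F t` over `t ≥ n` gains a factor `1 / (m + 1)` over the naive bound, because
`(m + 1) b t (tailSum b (t + 1)) ^ m ≤ tailSum b t ^ (m + 1) - tailSum b (t + 1) ^ (m + 1)`
telescopes. -/
theorem tsum_ite_mul_mul_factorial_le {b c F : ℕ → ℝ≥0∞} {n m : ℕ} (hc : ∀ t, c t ≤ b t)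
    (hF : ∀ t, F t * m ! ≤ tailSum b (t + 1) ^ m) :
    (∑' t, if n ≤ t then c t * F t else 0) * (m + 1)! ≤ tailSum b n ^ (m + 1) := by
  rw [← ENNReal.tsum_mul_right]
  calc ∑' t, (if n ≤ t then c t * F t else 0) * (m + 1)!
      ≤ ∑' t, if n ≤ t then (m + 1 : ℝ≥0∞) * (b t * tailSum b (t + 1) ^ m) else 0 := by
        refine ENNReal.tsum_le_tsum fun t => ?_
        split_ifs
        · calc c t * F t * (m + 1)! = (m + 1 : ℝ≥0∞) * (c t * (F t * m !)) := by
                rw [Nat.factorial_succ]; push_cast; ring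
            _ ≤ (m + 1 : ℝ≥0∞) * (b t * tailSum b (t + 1) ^ m) := by gcongr <;> simp [hc, hF]
        · simp
    _ ≤ tailSum b n ^ (m + 1) := by
        refine ENNReal.tsum_ite_le_le_of_add_le (u := fun t => tailSum b t ^ (m + 1)) fun t _ => ?_
        have bernoulli := pow_add_mul_le_add_pow_of_sq_nonneg (a := tailSum b (t + 1)) (b := b t)
          zero_le zero_le zero_le zero_le (m + 1)
        rw [tailSum_eq_add b t]
        calc (m + 1 : ℝ≥0∞) * (b t * tailSum b (t + 1) ^ m) + tailSum b (t + 1) ^ (m + 1)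
            = tailSum b (t + 1) ^ (m + 1) + ((m + 1 : ℕ) : ℝ≥0∞)
                * tailSum b (t + 1) ^ (m + 1 - 1) * b t := by
              rw [Nat.add_sub_cancel]; push_cast; ring
          _ ≤ (b t + tailSum b (t + 1)) ^ (m + 1) := by rwa [add_comm (b t)]

theorem chainSum_mul_factorial_le {b : ℕ → ℝ≥0∞} (hg : ∀ p t, g p t ≤ if p ≤ t then b t else 0)
    (n m : ℕ) : chainSum g n m * m ! ≤ tailSum b n ^ m := by
  induction m generalizing n with
  | zero => simp
  | succ m ih =>
    calc chainSum g n (m + 1) * (m + 1)!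
        ≤ (∑' t, if n ≤ t then b t * chainSum g (t + 1) m else 0) * (m + 1)! := by
          rw [chainSum_succ]
          gcongr with t
          grw [hg n t, ite_mul, zero_mul]
      _ ≤ tailSum b n ^ (m + 1) := tsum_ite_mul_mul_factorial_le (fun t => le_rfl) fun t => ih _

end ChainSum

section Coefficients

variable {a : ℕ → ℝ} {k : ℝ}

/-- The factor of `c_m` contributed by an index `t` whose predecessor bound is `p`; it vanishes at
`p = t + 1`. -/
noncomputable def gapKernel (a : ℕ → ℝ) (k : ℝ) (p t : ℕ) : ℝ :=
  (1 - k ^ (2 * (t + 1 - p))) / ((1 - k ^ 2) * a t)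

/-- `cSum a k 0 m = c_m`; for general `n` the chain starts at `j₁ ≥ n`, with first factor
`1 - k^{2(j₁+1-n)}`. -/
noncomputable def cSum (a : ℕ → ℝ) (k : ℝ) (n m : ℕ) : ℝ≥0∞ :=
  chainSum (fun p t => if p ≤ t then ENNReal.ofReal (gapKernel a k p t) else 0) n m

/-- `dSum a k n m = d_{n,m}`, split according to the first index `j₀ = t`. -/
noncomputable def dSum (a : ℕ → ℝ) (k : ℝ) (n m : ℕ) : ℝ≥0∞ :=
  ∑' t, if n ≤ t then ENNReal.ofReal (k ^ (2 * t) / a t) * cSum a k (t + 1) m else 0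

theorem dSum_eq_add (n m : ℕ) :
    dSum a k n m = ENNReal.ofReal (k ^ (2 * n) / a n) * cSum a k (n + 1) m + dSum a k (n + 1) m :=
  ENNReal.tsum_ite_le_eq_add _ n

theorem pow_two_mul_le_one (hk : k ^ 2 < 1) (p : ℕ) : k ^ (2 * p) ≤ 1 := by
  rw [pow_mul]
  exact pow_le_one₀ (sq_nonneg k) hk.le

variable (ha : ∀ n, 0 < a n) (hk : k ^ 2 < 1)
include ha hk

theorem gapKernel_nonneg (p t : ℕ) : 0 ≤ gapKernel a k p t :=
  div_nonneg (sub_nonneg.2 (pow_two_mul_le_one hk _)) (mul_pos (sub_pos.2 hk) (ha t)).le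

theorem gapKernel_le (p t : ℕ) : gapKernel a k p t ≤ 1 / ((1 - k ^ 2) * a t) :=
  div_le_div_of_nonneg_right (sub_le_self _ ((even_two_mul _).pow_nonneg k))
    (mul_pos (sub_pos.2 hk) (ha t)).le

theorem pow_div_le (t : ℕ) : k ^ (2 * t) / a t ≤ 1 / ((1 - k ^ 2) * a t) :=
  (div_le_div_of_nonneg_right (pow_two_mul_le_one hk t) (ha t).le).trans
    (one_div_le_one_div_of_le (mul_pos (sub_pos.2 hk) (ha t))
      (mul_le_of_le_one_left (ha t).le (sub_le_self _ (sq_nonneg k))))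

theorem pow_mul_gapKernel {n t : ℕ} (h : n ≤ t) :
    k ^ (2 * n) * gapKernel a k n t
      = k ^ (2 * n) * gapKernel a k (n + 1) t + k ^ (2 * t) / a t := by
  obtain ⟨s, rfl⟩ := Nat.exists_eq_add_of_le h
  have h1k : 1 - k ^ 2 ≠ 0 := (sub_pos.2 hk).ne'
  have han : a (n + s) ≠ 0 := (ha _).ne'
  simp only [gapKernel, show n + s + 1 - n = s + 1 by omega, show n + s + 1 - (n + 1) = s by omega]
  field_simp
  ring

theorem ofReal_mul_cSum_succ (n m : ℕ) :
    ENNReal.ofReal (k ^ (2 * n)) * cSum a k n (m + 1)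
      = ENNReal.ofReal (k ^ (2 * n)) * cSum a k (n + 1) (m + 1) + dSum a k n m := by
  simp only [cSum, chainSum_succ, ← ENNReal.tsum_mul_left, dSum, ← ENNReal.tsum_add]
  refine tsum_congr fun t => ?_
  by_cases hnt : n ≤ t
  · have hshift : (if n + 1 ≤ t then ENNReal.ofReal (gapKernel a k (n + 1) t) else 0)
        = ENNReal.ofReal (gapKernel a k (n + 1) t) := by
      split_ifs with h
      · rfl
      · simp [gapKernel, show t = n by omega]
    have hk2n : 0 ≤ k ^ (2 * n) := (even_two_mul _).pow_nonneg k
    simp only [if_pos hnt, hshift, ← mul_assoc, ← ENNReal.ofReal_mul hk2n, ← add_mul]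
    rw [← ENNReal.ofReal_add (mul_nonneg hk2n (gapKernel_nonneg ha hk _ _))
      (div_nonneg ((even_two_mul _).pow_nonneg k) (ha t).le), ← pow_mul_gapKernel ha hk hnt]
  · simp [hnt, show ¬n + 1 ≤ t by omega]

noncomputable def kernelBound (a : ℕ → ℝ) (k : ℝ) (t : ℕ) : ℝ≥0∞ :=
  ENNReal.ofReal (1 / ((1 - k ^ 2) * a t))

theorem cSum_mul_factorial_le (n m : ℕ) :
    cSum a k n m * m ! ≤ tailSum (kernelBound a k) n ^ m :=
  chainSum_mul_factorial_le _ (fun p t => by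
    split_ifs
    · exact ENNReal.ofReal_le_ofReal (gapKernel_le ha hk p t)
    · rfl) n m

theorem dSum_mul_factorial_le (n m : ℕ) :
    dSum a k n m * (m + 1)! ≤ tailSum (kernelBound a k) n ^ (m + 1) :=
  tsum_ite_mul_mul_factorial_le (fun t => ENNReal.ofReal_le_ofReal (pow_div_le ha hk t))
    fun t => cSum_mul_factorial_le ha hk (t + 1) m

end Coefficients

section ChainSumRepresentation

variable {a : ℕ → ℝ} {k : ℝ}

@[simp]
theorem cSum_zero (n : ℕ) : cSum a k n 0 = 1 :=
  chainSum_zero _ n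

theorem forall_chainPrev_zero_le_iff {m : ℕ} (j : Fin m → ℕ) :
    (∀ i, chainPrev 0 j i ≤ j i) ↔ StrictMono j := by
  cases m with
  | zero => simp [StrictMono]
  | succ m => simp [chainPrev_le_iff_strictMono]

theorem prod_gapKernel_chainPrev_zero {m : ℕ} (j : Fin m → ℕ) :
    ∏ i, gapKernel a k (chainPrev 0 j i) (j i)
      = gapPow k m j / ((1 - k ^ 2) ^ m * ∏ i, a (j i)) := by
  simp only [gapKernel, Finset.prod_div_distrib, Finset.prod_mul_distrib, Finset.prod_const,
    Finset.card_univ, Fintype.card_fin]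
  rfl

theorem dC_summand_eq {m : ℕ} (j : Fin (m + 1) → ℕ) :
    (k ^ (2 * j 0) * ∏ i : Fin m, (1 - k ^ (2 * (j i.succ - j i.castSucc)))) /
        ((1 - k ^ 2) ^ m * ∏ i, a (j i))
      = k ^ (2 * j 0) / a (j 0) * ∏ i : Fin m, gapKernel a k (j i.castSucc + 1) (j i.succ) := by
  simp only [gapKernel, Nat.add_sub_add_right, Finset.prod_div_distrib, Finset.prod_mul_distrib,
    Finset.prod_const, Finset.card_univ, Fintype.card_fin, Fin.prod_univ_succ (fun i => a (j i))]
  ring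

variable (ha : ∀ n, 0 < a n) (hk : k ^ 2 < 1)
include ha hk

theorem cC_eq_toReal_cSum (m : ℕ) : cC a k m = (cSum a k 0 m).toReal := by
  classical
  rw [cC, cSum, chainSum]
  refine tsum_subtype_eq_toReal_tsum (p := fun j : Fin m → ℕ => StrictMono j)
    (f := fun j => gapPow k m j / ((1 - k ^ 2) ^ m * ∏ i, a (j i))) (fun j => ?_) (fun j _ => ?_)
  · rw [Fintype.prod_ite_zero,
      ← ENNReal.ofReal_prod_of_nonneg fun i _ => gapKernel_nonneg ha hk _ _,
      prod_gapKernel_chainPrev_zero]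
    simp only [forall_chainPrev_zero_le_iff j]
  · rw [← prod_gapKernel_chainPrev_zero]
    exact Finset.prod_nonneg fun i _ => gapKernel_nonneg ha hk _ _

theorem dC_eq_toReal_dSum (n m : ℕ) : dC a k n m = (dSum a k n m).toReal := by
  classical
  set F : ℕ → (Fin m → ℕ) → ℝ≥0∞ := fun t j =>
    (if n ≤ t then ENNReal.ofReal (k ^ (2 * t) / a t) else 0) *
      ∏ i, (if chainPrev (t + 1) j i ≤ j i then
        ENNReal.ofReal (gapKernel a k (chainPrev (t + 1) j i) (j i)) else 0) with hF
  have hsplit : dSum a k n m = ∑' j : Fin (m + 1) → ℕ, F (j 0) (Fin.tail j) := by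
    rw [ENNReal.tsum_fin_succ_eq_tsum_tsum F]
    refine tsum_congr fun t => ?_
    split_ifs <;> simp [F, cSum, chainSum, ENNReal.tsum_mul_left, *]
  rw [hsplit, dC]
  refine tsum_subtype_eq_toReal_tsum (p := fun j : Fin (m + 1) → ℕ => StrictMono j ∧ n ≤ j 0)
    (f := fun j => (k ^ (2 * j 0) * ∏ i : Fin m, (1 - k ^ (2 * (j i.succ - j i.castSucc)))) /
      ((1 - k ^ 2) ^ m * ∏ i, a (j i))) (fun j => ?_) (fun j _ => ?_)
  · simp only [hF, chainPrev_tail, Fin.tail]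
    rw [Fintype.prod_ite_zero, ite_zero_mul_ite_zero,
      ← ENNReal.ofReal_prod_of_nonneg fun i _ => gapKernel_nonneg ha hk _ _,
      ← ENNReal.ofReal_mul (div_nonneg ((even_two_mul _).pow_nonneg k) (ha _).le), dC_summand_eq]
    simp only [Fin.strictMono_iff_lt_succ, Nat.add_one_le_iff, and_comm]
  · rw [dC_summand_eq]
    exact mul_nonneg (div_nonneg ((even_two_mul _).pow_nonneg k) (ha _).le)
      (Finset.prod_nonneg fun i _ => gapKernel_nonneg ha hk _ _)

end ChainSumRepresentation

theorem ENNReal.ne_top_of_mul_factorial_le {x y : ℝ≥0∞} {m : ℕ} (hy : y ≠ ⊤) (h : x * m ! ≤ y) :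
    x ≠ ⊤ :=
  ne_top_of_le_ne_top hy <| le_trans (le_mul_of_one_le_right zero_le
    (by exact_mod_cast Nat.one_le_of_lt (Nat.factorial_pos m))) h

section RealCoefficients

variable {a : ℕ → ℝ} {k : ℝ} (ha : ∀ n, 0 < a n) (hsum : Summable fun n => 1 / a n)
  (hk : k ^ 2 < 1)
include ha hsum hk

theorem tailSum_kernelBound_ne_top (n : ℕ) :
    tailSum (kernelBound a k) n ≠ ⊤ := by
  have hb : Summable fun t => 1 / ((1 - k ^ 2) * a t) :=
    (hsum.mul_left (1 - k ^ 2)⁻¹).congr fun t => by rw [one_div, one_div, mul_inv]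
  refine ne_top_of_le_ne_top (b := ∑' t, kernelBound a k t) ?_ (ENNReal.tsum_le_tsum fun t => ?_)
  · unfold kernelBound
    rw [← ENNReal.ofReal_tsum_of_nonneg
      (fun t => (one_div_pos.2 (mul_pos (sub_pos.2 hk) (ha t))).le) hb]
    exact ENNReal.ofReal_ne_top
  · split_ifs
    · rfl
    · exact zero_le

theorem cSum_ne_top (n m : ℕ) : cSum a k n m ≠ ⊤ :=
  ENNReal.ne_top_of_mul_factorial_le (ENNReal.pow_ne_top (tailSum_kernelBound_ne_top ha hsum hk n))
    (cSum_mul_factorial_le ha hk n m)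

theorem dSum_ne_top (n m : ℕ) : dSum a k n m ≠ ⊤ :=
  ENNReal.ne_top_of_mul_factorial_le (ENNReal.pow_ne_top (tailSum_kernelBound_ne_top ha hsum hk n))
    (dSum_mul_factorial_le ha hk n m)

theorem dC_eq_add (n m : ℕ) :
    dC a k n m = k ^ (2 * n) / a n * (cSum a k (n + 1) m).toReal + dC a k (n + 1) m := by
  rw [dC_eq_toReal_dSum ha hk, dC_eq_toReal_dSum ha hk, dSum_eq_add,
    ENNReal.toReal_add (ENNReal.mul_ne_top ENNReal.ofReal_ne_top (cSum_ne_top ha hsum hk _ _))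
      (dSum_ne_top ha hsum hk _ _), ENNReal.toReal_mul,
    ENNReal.toReal_ofReal (div_nonneg ((even_two_mul _).pow_nonneg k) (ha n).le)]

theorem pow_mul_toReal_cSum_succ (n m : ℕ) :
    k ^ (2 * n) * (cSum a k n (m + 1)).toReal
      = k ^ (2 * n) * (cSum a k (n + 1) (m + 1)).toReal + dC a k n m := by
  have h := congrArg ENNReal.toReal (ofReal_mul_cSum_succ ha hk n m)
  rwa [ENNReal.toReal_mul, ENNReal.toReal_add
      (ENNReal.mul_ne_top ENNReal.ofReal_ne_top (cSum_ne_top ha hsum hk _ _))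
      (dSum_ne_top ha hsum hk _ _), ENNReal.toReal_mul,
    ENNReal.toReal_ofReal ((even_two_mul _).pow_nonneg k), ← dC_eq_toReal_dSum ha hk] at h

end RealCoefficients

/-- `Wgt a k n` is `altSeries (dC a k n)` and `Fgt a k` is `altSeries (cC a k)`. -/
noncomputable def altSeries (c : ℕ → ℝ) (z : ℂ) : ℂ :=
  ∑' m, (-1 : ℂ) ^ m * c m * z ^ m

section AltSeries

variable {c d e : ℕ → ℝ} {z : ℂ}

theorem summable_altSeries_toReal {E : ℕ → ℝ≥0∞} {C q : ℝ≥0∞} (hC : C ≠ ⊤) (hq : q ≠ ⊤)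
    (h : ∀ m, E m * m ! ≤ C * q ^ m) (z : ℂ) :
    Summable fun m => (-1 : ℂ) ^ m * ((E m).toReal : ℂ) * z ^ m := by
  refine Summable.of_norm_bounded
    ((Real.summable_pow_div_factorial (q.toReal * ‖z‖)).mul_left C.toReal) fun m => ?_
  have hm : (0 : ℝ) < m ! := by exact_mod_cast Nat.factorial_pos m
  have hE : (E m).toReal * m ! ≤ C.toReal * q.toReal ^ m := by
    simpa using ENNReal.toReal_mono (ENNReal.mul_ne_top hC (ENNReal.pow_ne_top hq)) (h m)
  simp only [norm_mul, norm_pow, norm_neg, norm_one, one_pow, one_mul, Complex.norm_real,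
    Real.norm_of_nonneg ENNReal.toReal_nonneg]
  calc (E m).toReal * ‖z‖ ^ m = (E m).toReal * m ! * ‖z‖ ^ m / m ! := by field_simp
    _ ≤ C.toReal * q.toReal ^ m * ‖z‖ ^ m / m ! := by gcongr
    _ = C.toReal * ((q.toReal * ‖z‖) ^ m / m !) := by ring

theorem altSeries_sub (hc : Summable fun m => (-1 : ℂ) ^ m * (c m : ℂ) * z ^ m)
    (hd : Summable fun m => (-1 : ℂ) ^ m * (d m : ℂ) * z ^ m) :
    altSeries (fun m => c m - d m) z = altSeries c z - altSeries d z := by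
  rw [altSeries, altSeries, altSeries, ← hc.tsum_sub hd]
  congr 1 with m
  push_cast
  ring

theorem altSeries_const_mul (r : ℝ) (c : ℕ → ℝ) (z : ℂ) :
    altSeries (fun m => r * c m) z = r * altSeries c z := by
  rw [altSeries, altSeries, ← tsum_mul_left]
  congr 1 with m
  push_cast
  ring

theorem altSeries_eq_neg_mul_of_shift (h0 : e 0 = 0) (hs : ∀ m, e (m + 1) = c m) (z : ℂ) :
    altSeries e z = -z * altSeries c z := by
  rw [altSeries, altSeries, ← tsum_mul_left,
    ← Nat.succ_injective.tsum_eq (f := fun m => (-1 : ℂ) ^ m * e m * z ^ m)]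
  · congr 1 with m
    simp only [Nat.succ_eq_add_one, hs]
    ring
  · rintro (_ | m) hm
    · simp [h0] at hm
    · exact ⟨m, rfl⟩

theorem altSeries_eq_add (hc : Summable fun m => (-1 : ℂ) ^ m * (c m : ℂ) * z ^ m) :
    altSeries c z = c 0 + ∑' m, (-1 : ℂ) ^ (m + 1) * c (m + 1) * z ^ (m + 1) := by
  rw [altSeries, tsum_eq_zero_add' ((summable_nat_add_iff 1).2 hc)]
  simp

end AltSeries

section Wgt

variable {a : ℕ → ℝ} {k : ℝ} (ha : ∀ n, 0 < a n) (hsum : Summable fun n => 1 / a n)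
  (hk : k ^ 2 < 1)
include ha hsum hk

theorem summable_dC (n : ℕ) (z : ℂ) :
    Summable fun m => (-1 : ℂ) ^ m * (dC a k n m : ℂ) * z ^ m := by
  have hS := tailSum_kernelBound_ne_top ha hsum hk n
  simpa only [dC_eq_toReal_dSum ha hk] using summable_altSeries_toReal hS hS (fun m => calc
    dSum a k n m * m ! ≤ dSum a k n m * (m + 1)! := by
      gcongr; exact Nat.le_succ m
    _ ≤ tailSum (kernelBound a k) n ^ (m + 1) := dSum_mul_factorial_le ha hk n m
    _ = _ := pow_succ' _ _) z

theorem summable_cSum (n : ℕ) (z : ℂ) :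
    Summable fun m => (-1 : ℂ) ^ m * ((cSum a k n m).toReal : ℂ) * z ^ m :=
  summable_altSeries_toReal ENNReal.one_ne_top (tailSum_kernelBound_ne_top ha hsum hk n)
    (fun m => (one_mul (_ : ℝ≥0∞)).symm ▸ cSum_mul_factorial_le ha hk n m) z

theorem Fgt_eq_altSeries (z : ℂ) : Fgt a k z = altSeries (fun m => (cSum a k 0 m).toReal) z := by
  rw [altSeries_eq_add (summable_cSum ha hsum hk 0 z)]
  simp [Fgt, cC_eq_toReal_cSum ha hk]

theorem mul_Wgt_sub_Wgt_succ (n : ℕ) (z : ℂ) :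
    (a n : ℂ) * (Wgt a k n z - Wgt a k (n + 1) z)
      = ((k ^ (2 * n) : ℝ) : ℂ) * altSeries (fun m => (cSum a k (n + 1) m).toReal) z := by
  change (a n : ℂ) * (altSeries (dC a k n) z - altSeries (dC a k (n + 1)) z) = _
  rw [← altSeries_sub (summable_dC ha hsum hk n z) (summable_dC ha hsum hk (n + 1) z),
    ← altSeries_const_mul, ← altSeries_const_mul]
  congr 1 with m
  rw [dC_eq_add ha hsum hk]
  field_simp [(ha n).ne']
  ring

theorem pow_mul_altSeries_cSum_sub (n : ℕ) (z : ℂ) :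
    ((k ^ (2 * n) : ℝ) : ℂ) * (altSeries (fun m => (cSum a k n m).toReal) z
      - altSeries (fun m => (cSum a k (n + 1) m).toReal) z) = -z * Wgt a k n z := by
  rw [← altSeries_sub (summable_cSum ha hsum hk n z) (summable_cSum ha hsum hk (n + 1) z),
    ← altSeries_const_mul]
  refine altSeries_eq_neg_mul_of_shift (by simp) (fun m => ?_) z
  rw [mul_sub, pow_mul_toReal_cSum_succ ha hsum hk]
  ring

theorem Wgt_three_term (n : ℕ) (z : ℂ) :
    (a (n + 1) : ℂ) * Wgt a k (n + 2) z
      - ((a (n + 1) : ℂ) + (k : ℂ) ^ 2 * a n - z) * Wgt a k (n + 1) z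
      + (k : ℂ) ^ 2 * a n * Wgt a k n z = 0 := by
  have h₁ := mul_Wgt_sub_Wgt_succ ha hsum hk n z
  have h₂ := mul_Wgt_sub_Wgt_succ ha hsum hk (n + 1) z
  have h₃ := pow_mul_altSeries_cSum_sub ha hsum hk (n + 1) z
  push_cast at h₁ h₂ h₃
  linear_combination (k : ℂ) ^ 2 * h₁ - h₂ + h₃

theorem mul_Wgt_sub_Wgt_one (z : ℂ) :
    (a 0 : ℂ) * (Wgt a k 0 z - Wgt a k 1 z) - z * Wgt a k 0 z = Fgt a k z := by
  have h₁ := mul_Wgt_sub_Wgt_succ ha hsum hk 0 z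
  have h₃ := pow_mul_altSeries_cSum_sub ha hsum hk 0 z
  rw [Fgt_eq_altSeries ha hsum hk]
  simp only [mul_zero, pow_zero, Complex.ofReal_one, one_mul, zero_add] at h₁ h₃
  linear_combination h₁ - h₃

end Wgt

section Phi

variable {a : ℕ → ℝ} {k : ℝ} (ha : ∀ n, 0 < a n) (hsum : Summable fun n => 1 / a n)
  (hk : k ^ 2 < 1) (hk₀ : k ≠ 0)
include ha hsum hk hk₀

theorem Phi_three_term (n : ℕ) (z : ℂ) :
    (alph a k (n + 1) : ℂ) * Phi a k (n + 2) z + ((bet a k (n + 1) : ℂ) - z) * Phi a k (n + 1) z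
      + (alph a k n : ℂ) * Phi a k n z = 0 := by
  have h := Wgt_three_term ha hsum hk n z
  have hku : (k : ℂ) * (k : ℂ)⁻¹ = 1 := mul_inv_cancel₀ (Complex.ofReal_ne_zero.2 hk₀)
  simp only [Phi, alph, bet, ← inv_pow]
  push_cast
  linear_combination (-1 : ℂ) ^ n * (k : ℂ)⁻¹ ^ (n + 1) * h + (-1 : ℂ) ^ n *
    ((a (n + 1) : ℂ) * (k : ℂ)⁻¹ ^ (n + 1) * Wgt a k (n + 2) z
      - k * a n * (k : ℂ)⁻¹ ^ n * Wgt a k n z) * hku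

theorem alph_mul_wronskian_zero {z P₁ : ℂ}
    (hP₁ : (alph a k 0 : ℂ) * P₁ + ((bet a k 0 : ℂ) - z) * 1 = 0) :
    (alph a k 0 : ℂ) * (Phi a k 1 z - P₁ * Phi a k 0 z) = Fgt a k z := by
  have h := mul_Wgt_sub_Wgt_one ha hsum hk z
  have hku : (k : ℂ) * (k : ℂ)⁻¹ = 1 := mul_inv_cancel₀ (Complex.ofReal_ne_zero.2 hk₀)
  simp only [Phi, alph, bet] at hP₁ ⊢
  push_cast at hP₁ ⊢
  linear_combination -(a 0 : ℂ) * Wgt a k 1 z * hku - Wgt a k 0 z * hP₁ + h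

end Phi

/-- The Wronskian of `(P_n(z))` and `(Φ_n(z))` is the constant `𝔉(z)`:
`α_n (P_n(z) Φ_{n+1}(z) − P_{n+1}(z) Φ_n(z)) = 𝔉(z)` for all `n ≥ 0`, `z ∈ ℂ`. -/
theorem statement5
    (a : ℕ → ℝ) (ha : ∀ n, 0 < a n) (hsum : Summable fun n => 1 / a n)
    (k : ℝ) (hk : k ∈ Set.Ioo (0 : ℝ) 1)
    (P : ℕ → ℂ → ℂ)
    (hP0 : ∀ z, P 0 z = 1)
    (hP1 : ∀ z, (alph a k 0 : ℂ) * P 1 z + ((bet a k 0 : ℂ) - z) * P 0 z = 0)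
    (hPrec : ∀ n, 1 ≤ n → ∀ z,
      (alph a k n : ℂ) * P (n + 1) z + ((bet a k n : ℂ) - z) * P n z
        + (alph a k (n - 1) : ℂ) * P (n - 1) z = 0)
    (n : ℕ) (z : ℂ) :
    (alph a k n : ℂ) * (P n z * Phi a k (n + 1) z - P (n + 1) z * Phi a k n z)
      = Fgt a k z := by
  obtain ⟨hk₀, hk₁⟩ := hk
  have hk : k ^ 2 < 1 := pow_lt_one₀ hk₀.le hk₁ two_ne_zero
  have hP : ∀ n, (alph a k (n + 1) : ℂ) * P (n + 2) z + ((bet a k (n + 1) : ℂ) - z) * P (n + 1) z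
      + (alph a k n : ℂ) * P n z = 0 := fun n => by
    simpa only [Nat.add_sub_cancel] using hPrec (n + 1) n.succ_pos z
  calc (alph a k n : ℂ) * (P n z * Phi a k (n + 1) z - P (n + 1) z * Phi a k n z)
      = (alph a k 0 : ℂ) * (P 0 z * Phi a k 1 z - P 1 z * Phi a k 0 z) :=
        wronskian_eq_of_three_term_recurrence (α := fun n => (alph a k n : ℂ))
          (γ := fun n => (bet a k n : ℂ) - z) (P := (P · z)) (Q := (Phi a k · z)) hP
          (Phi_three_term ha hsum hk hk₀.ne' · z) n
    _ = Fgt a k z := by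
        rw [hP0, one_mul]
        exact alph_mul_wronskian_zero ha hsum hk hk₀.ne' (by simpa only [hP0] using hP1 z)
end

section
/- For every q ∈ (0,1), every w ∈ ℂ with |w| < 1, and every integer m ≥ 1: (1 − q^m)(w;q)_m · Σ_{j=0}^∞ [ q^{(m+1)j} w^j / (1 − q^{j+m}) ] · Σ_{n=0}^∞ [ q^{(j+m+1)n} / (q^n w; q)_{m+1} ] = Σ_{j=0}^∞ q^{mj} w^j / (1 − q^{j+m+1}), with all series converging absolutely. -/
/-!
Everything rests on the two partial-fraction identities
`1/(x;q)_m - 1/(qx;q)_m = (1 - q^m) x/(x;q)_{m+1}` and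
`1/(x;q)_m - q^m/(qx;q)_m = (1 - q^m)/(x;q)_{m+1}`,
both read off from `(x;q)_{m+1} = (x;q)_m (1 - q^m x) = (1 - x)(qx;q)_m`.
Summing the first one at `x = q^n w` against `q^{(j+m)n}` by parts turns `(1 - q^m) w` times
the inner series into `1/(w;q)_m - (1 - q^{j+m}) S_j` with `S_j = Σ_n q^{(j+m)n}/(q^{n+1}w;q)_m`.
After exchanging the two summations the `j`-series is geometric, and the resulting `n`-series
telescopes by the second identity to `1/((1 - q^m)(qw;q)_m)`. Shifting the index of the outer
series `Σ_j q^{(m+1)j} w^j/(1 - q^{j+m})` by one produces `w` times the right-hand side, up to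
terms that cancel because `(w;q)_m (1 - q^m w) = (1 - w)(qw;q)_m`.
All series converge absolutely since their terms are bounded multiples of `|q|^n`: every factor
`1/(q^n w;q)_r` is at most `(1 - |w|)^{-r}` in norm.
-/

open scoped BigOperators

/-- The q-Pochhammer symbol `(w;q)_r = ∏_{i=0}^{r−1} (1 − q^i w)` (complex version). -/
noncomputable def qPC (q w : ℂ) (r : ℕ) : ℂ := ∏ i ∈ Finset.range r, (1 - q ^ i * w)

open Finset

lemma qPC_succ (q x : ℂ) (r : ℕ) : qPC q x (r + 1) = qPC q x r * (1 - q ^ r * x) :=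
  prod_range_succ _ _

lemma qPC_succ' (q x : ℂ) (r : ℕ) : qPC q x (r + 1) = (1 - x) * qPC q (q * x) r := by
  simp only [qPC, prod_range_succ', pow_zero, one_mul, pow_succ, mul_assoc, mul_comm (1 - x)]

@[simp] lemma qPC_zero_right (q : ℂ) (r : ℕ) : qPC q 0 r = 1 := by simp [qPC]

lemma inv_qPC_mul_qPC_succ {q x : ℂ} {m : ℕ} (h : qPC q x (m + 1) ≠ 0) :
    (qPC q x m)⁻¹ * qPC q x (m + 1) = 1 - q ^ m * x := by
  rw [qPC_succ] at h ⊢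
  rw [inv_mul_cancel_left₀ (left_ne_zero_of_mul h)]

lemma inv_qPC_mul_mul_qPC_succ {q x : ℂ} {m : ℕ} (h : qPC q x (m + 1) ≠ 0) :
    (qPC q (q * x) m)⁻¹ * qPC q x (m + 1) = 1 - x := by
  rw [qPC_succ'] at h ⊢
  rw [mul_comm (1 - x), inv_mul_cancel_left₀ (right_ne_zero_of_mul h)]

lemma inv_qPC_sub_inv_qPC_mul {q x : ℂ} {m : ℕ} (h : qPC q x (m + 1) ≠ 0) :
    (qPC q x m)⁻¹ - (qPC q (q * x) m)⁻¹ = (1 - q ^ m) * x / qPC q x (m + 1) := by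
  rw [eq_div_iff h, sub_mul, inv_qPC_mul_qPC_succ h, inv_qPC_mul_mul_qPC_succ h]
  ring

lemma inv_qPC_sub_pow_mul_inv_qPC_mul {q x : ℂ} {m : ℕ} (h : qPC q x (m + 1) ≠ 0) :
    (qPC q x m)⁻¹ - q ^ m * (qPC q (q * x) m)⁻¹ = (1 - q ^ m) / qPC q x (m + 1) := by
  rw [eq_div_iff h, sub_mul, mul_assoc, inv_qPC_mul_qPC_succ h, inv_qPC_mul_mul_qPC_succ h]
  ring

lemma norm_pow_mul_le_norm {q : ℂ} (hq : ‖q‖ ≤ 1) (n : ℕ) (x : ℂ) : ‖q ^ n * x‖ ≤ ‖x‖ := by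
  rw [norm_mul, norm_pow]
  exact mul_le_of_le_one_left (norm_nonneg x) (pow_le_one₀ (norm_nonneg q) hq)

lemma one_sub_norm_pow_le_norm_qPC {q x : ℂ} (hq : ‖q‖ ≤ 1) (hx : ‖x‖ ≤ 1) (r : ℕ) :
    (1 - ‖x‖) ^ r ≤ ‖qPC q x r‖ := by
  calc (1 - ‖x‖) ^ r = ∏ _i ∈ range r, (1 - ‖x‖) := by simp
    _ ≤ ∏ i ∈ range r, ‖1 - q ^ i * x‖ := by
      refine prod_le_prod (fun _ _ => sub_nonneg.2 hx) fun i _ => ?_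
      calc 1 - ‖x‖ ≤ ‖(1 : ℂ)‖ - ‖q ^ i * x‖ := by
            rw [norm_one]; linarith [norm_pow_mul_le_norm hq i x]
        _ ≤ ‖1 - q ^ i * x‖ := norm_sub_norm_le _ _
    _ = ‖qPC q x r‖ := (norm_prod _ _).symm

lemma qPC_ne_zero {q x : ℂ} (hq : ‖q‖ ≤ 1) (hx : ‖x‖ < 1) (r : ℕ) : qPC q x r ≠ 0 :=
  norm_pos_iff.1 <| (pow_pos (sub_pos.2 hx) r).trans_le (one_sub_norm_pow_le_norm_qPC hq hx.le r)

lemma qPC_pow_mul_ne_zero {q w : ℂ} (hq : ‖q‖ ≤ 1) (hw : ‖w‖ < 1) (n r : ℕ) :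
    qPC q (q ^ n * w) r ≠ 0 :=
  qPC_ne_zero hq ((norm_pow_mul_le_norm hq n w).trans_lt hw) r

lemma norm_inv_qPC_pow_mul_le {q w : ℂ} (hq : ‖q‖ ≤ 1) (hw : ‖w‖ < 1) (n r : ℕ) :
    ‖(qPC q (q ^ n * w) r)⁻¹‖ ≤ ((1 - ‖w‖) ^ r)⁻¹ := by
  have hx := norm_pow_mul_le_norm hq n w
  rw [norm_inv]
  refine inv_anti₀ (pow_pos (sub_pos.2 hw) r) ?_
  calc (1 - ‖w‖) ^ r ≤ (1 - ‖q ^ n * w‖) ^ r := by gcongr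
    _ ≤ _ := one_sub_norm_pow_le_norm_qPC hq (hx.trans hw.le) r

lemma norm_pow_lt_one_of_ne_zero {q : ℂ} (hq : ‖q‖ < 1) {k : ℕ} (hk : k ≠ 0) : ‖q ^ k‖ < 1 := by
  rw [norm_pow]
  exact pow_lt_one₀ (norm_nonneg q) hq hk

lemma one_sub_ne_zero_of_norm_lt_one {x : ℂ} (hx : ‖x‖ < 1) : 1 - x ≠ 0 :=
  sub_ne_zero.2 fun h => by simp [← h] at hx

lemma one_sub_pow_ne_zero {q : ℂ} (hq : ‖q‖ < 1) {k : ℕ} (hk : k ≠ 0) : 1 - q ^ k ≠ 0 :=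
  one_sub_ne_zero_of_norm_lt_one (norm_pow_lt_one_of_ne_zero hq hk)

lemma norm_inv_one_sub_pow_le {q : ℂ} (hq : ‖q‖ < 1) {k : ℕ} (hk : k ≠ 0) :
    ‖(1 - q ^ k)⁻¹‖ ≤ (1 - ‖q‖)⁻¹ := by
  rw [norm_inv]
  refine inv_anti₀ (sub_pos.2 hq) ?_
  calc 1 - ‖q‖ ≤ ‖(1 : ℂ)‖ - ‖q ^ k‖ := by
        rw [norm_one, norm_pow]
        linarith [pow_le_of_le_one (norm_nonneg q) hq.le hk]
    _ ≤ ‖1 - q ^ k‖ := norm_sub_norm_le _ _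

lemma norm_pow_pow_mul_le {q b : ℂ} {C : ℝ} (hq : ‖q‖ ≤ 1) {k : ℕ} (hk : k ≠ 0) (n : ℕ)
    (hb : ‖b‖ ≤ C) : ‖(q ^ k) ^ n * b‖ ≤ C * ‖q‖ ^ n := by
  rw [norm_mul, ← pow_mul, norm_pow, mul_comm C]
  exact mul_le_mul (pow_le_pow_of_le_one (norm_nonneg q) hq (Nat.le_mul_of_pos_left n (by omega)))
    hb (norm_nonneg b) (pow_nonneg (norm_nonneg q) _)

section BoundedTimesGeometric

variable {q : ℂ} {b : ℕ → ℂ} {C : ℝ} {k : ℕ}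

lemma summable_norm_pow_pow_mul (hq : ‖q‖ < 1) (hk : k ≠ 0) (hb : ∀ n, ‖b n‖ ≤ C) :
    Summable fun n => ‖(q ^ k) ^ n * b n‖ :=
  .of_nonneg_of_le (fun _ => norm_nonneg _) (fun n => norm_pow_pow_mul_le hq.le hk n (hb n))
    ((summable_geometric_of_lt_one (norm_nonneg q) hq).mul_left C)

lemma norm_tsum_pow_pow_mul_le (hq : ‖q‖ < 1) (hk : k ≠ 0) (hb : ∀ n, ‖b n‖ ≤ C) :
    ‖∑' n, (q ^ k) ^ n * b n‖ ≤ C * (1 - ‖q‖)⁻¹ :=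
  tsum_of_norm_bounded ((hasSum_geometric_of_lt_one (norm_nonneg q) hq).mul_left C)
    fun n => norm_pow_pow_mul_le hq.le hk n (hb n)

end BoundedTimesGeometric

section SummationByParts

variable {K : Type*} [Field K] [TopologicalSpace K] [IsTopologicalRing K] [T2Space K]
  {z : K} {b : ℕ → K}

lemma tsum_pow_mul_eq_add (hs : Summable fun n => z ^ n * b n) :
    ∑' n, z ^ n * b n = b 0 + z * ∑' n, z ^ n * b (n + 1) := by
  rw [hs.tsum_eq_zero_add, ← tsum_mul_left]
  simp only [pow_zero, one_mul, pow_succ', mul_assoc]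

lemma tsum_pow_mul_sub_succ (hs : Summable fun n => z ^ n * b n)
    (hs' : Summable fun n => z ^ n * b (n + 1)) :
    ∑' n, z ^ n * (b n - b (n + 1)) = b 0 - (1 - z) * ∑' n, z ^ n * b (n + 1) := by
  simp_rw [mul_sub]
  rw [hs.tsum_sub hs', tsum_pow_mul_eq_add hs]
  ring

lemma tsum_pow_mul_sub_mul_succ (hs : Summable fun n => z ^ n * b n)
    (hs' : Summable fun n => z ^ n * b (n + 1)) :
    ∑' n, z ^ n * (b n - z * b (n + 1)) = b 0 := by
  simp_rw [mul_sub, mul_left_comm _ z]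
  rw [hs.tsum_sub (hs'.mul_left z), tsum_mul_left, tsum_pow_mul_eq_add hs]
  ring

end SummationByParts

section QSeries

variable {q w : ℂ}

lemma summable_pow_pow_mul_inv_qPC (hq : ‖q‖ < 1) (hw : ‖w‖ < 1) {k : ℕ} (hk : k ≠ 0)
    (l r : ℕ) : Summable fun n => (q ^ k) ^ n * (qPC q (q ^ (n + l) * w) r)⁻¹ :=
  (summable_norm_pow_pow_mul hq hk fun n => norm_inv_qPC_pow_mul_le hq.le hw (n + l) r).of_norm

lemma one_sub_pow_mul_mul_tsum_pow_div_qPC (hq : ‖q‖ < 1) (hw : ‖w‖ < 1) (m : ℕ) {c : ℕ}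
    (hc : c ≠ 0) :
    (1 - q ^ m) * w * ∑' n, q ^ ((c + 1) * n) / qPC q (q ^ n * w) (m + 1)
      = (qPC q w m)⁻¹ - (1 - q ^ c) * ∑' n, (q ^ c) ^ n * (qPC q (q ^ (n + 1) * w) m)⁻¹ := by
  have hterm : ∀ n, (1 - q ^ m) * w * (q ^ ((c + 1) * n) / qPC q (q ^ n * w) (m + 1))
      = (q ^ c) ^ n * ((qPC q (q ^ n * w) m)⁻¹ - (qPC q (q ^ (n + 1) * w) m)⁻¹) := by
    intro n
    rw [show q ^ (n + 1) * w = q * (q ^ n * w) by ring,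
      inv_qPC_sub_inv_qPC_mul (qPC_pow_mul_ne_zero hq.le hw n _)]
    ring
  rw [← tsum_mul_left, tsum_congr hterm,
    tsum_pow_mul_sub_succ (b := fun n => (qPC q (q ^ n * w) m)⁻¹)
      (summable_pow_pow_mul_inv_qPC hq hw hc 0 m) (summable_pow_pow_mul_inv_qPC hq hw hc 1 m)]
  simp

lemma one_sub_pow_mul_tsum_pow_div_qPC_succ (hq : ‖q‖ < 1) (hw : ‖w‖ < 1) {m : ℕ} (hm : m ≠ 0) :
    (1 - q ^ m) * ∑' n, (q ^ m) ^ n / qPC q (q ^ (n + 1) * w) (m + 1) = (qPC q (q * w) m)⁻¹ := by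
  have hterm : ∀ n, (1 - q ^ m) * ((q ^ m) ^ n / qPC q (q ^ (n + 1) * w) (m + 1))
      = (q ^ m) ^ n *
        ((qPC q (q ^ (n + 1) * w) m)⁻¹ - q ^ m * (qPC q (q ^ (n + 1 + 1) * w) m)⁻¹) := by
    intro n
    rw [show q ^ (n + 1 + 1) * w = q * (q ^ (n + 1) * w) by ring,
      inv_qPC_sub_pow_mul_inv_qPC_mul (qPC_pow_mul_ne_zero hq.le hw (n + 1) _)]
    ring
  rw [← tsum_mul_left, tsum_congr hterm,
    tsum_pow_mul_sub_mul_succ (b := fun n => (qPC q (q ^ (n + 1) * w) m)⁻¹)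
      (summable_pow_pow_mul_inv_qPC hq hw hm 1 m) (summable_pow_pow_mul_inv_qPC hq hw hm 2 m)]
  simp

lemma summable_norm_pow_mul_pow_div_one_sub_pow (hq : ‖q‖ < 1) (hw : ‖w‖ < 1) {k l : ℕ}
    (hk : k ≠ 0) (hl : l ≠ 0) : Summable fun j => ‖q ^ (k * j) * w ^ j / (1 - q ^ (j + l))‖ := by
  have hb : ∀ j, ‖w ^ j * (1 - q ^ (j + l))⁻¹‖ ≤ (1 - ‖q‖)⁻¹ := fun j =>
    (norm_pow_mul_le_norm hw.le j _).trans (norm_inv_one_sub_pow_le hq (by omega))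
  simpa only [pow_mul, div_eq_mul_inv, mul_assoc] using summable_norm_pow_pow_mul hq hk hb

lemma tsum_pow_mul_tsum_pow_mul_inv_qPC (hq : ‖q‖ < 1) (hw : ‖w‖ < 1) {m : ℕ} (hm : m ≠ 0) :
    ∑' j, q ^ ((m + 1) * j) * w ^ j * ∑' n, (q ^ (j + m)) ^ n * (qPC q (q ^ (n + 1) * w) m)⁻¹
      = ∑' n, (q ^ m) ^ n / qPC q (q ^ (n + 1) * w) (m + 1) := by
  set a : ℕ → ℂ := fun n => (qPC q (q ^ (n + 1) * w) m)⁻¹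
  have ha : ∀ n, ‖a n‖ ≤ ((1 - ‖w‖) ^ m)⁻¹ := fun n => norm_inv_qPC_pow_mul_le hq.le hw (n + 1) m
  have hsum : Summable (Function.uncurry fun j n =>
      q ^ ((m + 1) * j) * w ^ j * ((q ^ (j + m)) ^ n * a n)) := by
    refine .of_norm_bounded ((summable_geometric_of_lt_one (norm_nonneg q) hq).mul_of_nonneg
      ((summable_geometric_of_lt_one (norm_nonneg q) hq).mul_left ((1 - ‖w‖) ^ m)⁻¹)
      (fun _ => by positivity) (fun _ => by positivity)) ?_
    rintro ⟨j, n⟩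
    have hw' : ‖w ^ j * ((q ^ (j + m)) ^ n * a n)‖ ≤ ((1 - ‖w‖) ^ m)⁻¹ * ‖q‖ ^ n :=
      (norm_pow_mul_le_norm hw.le j _).trans (norm_pow_pow_mul_le hq.le (by omega) n (ha n))
    simpa only [Function.uncurry_apply_pair, pow_mul, mul_assoc, mul_comm (‖q‖ ^ j)] using
      norm_pow_pow_mul_le hq.le m.add_one_ne_zero j hw'
  simp_rw [← tsum_mul_left]
  rw [← hsum.tsum_comm]
  refine tsum_congr fun n => ?_
  have hratio : ‖q ^ (m + 1 + n) * w‖ < 1 := (norm_pow_mul_le_norm hq.le _ w).trans_lt hw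
  have hterm : ∀ j, q ^ ((m + 1) * j) * w ^ j * ((q ^ (j + m)) ^ n * a n)
      = (q ^ m) ^ n * a n * (q ^ (m + 1 + n) * w) ^ j := fun j => by ring
  rw [tsum_congr hterm, tsum_mul_left, tsum_geometric_of_norm_lt_one hratio, qPC_succ,
    show q ^ m * (q ^ (n + 1) * w) = q ^ (m + 1 + n) * w by ring]
  simp only [a, div_eq_mul_inv, mul_inv, mul_assoc]

lemma tsum_pow_mul_pow_div_one_sub_pow_eq (hq : ‖q‖ < 1) (hw : ‖w‖ < 1) {m : ℕ} (hm : m ≠ 0) :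
    ∑' j, q ^ ((m + 1) * j) * w ^ j / (1 - q ^ (j + m))
      = (1 - q ^ m)⁻¹ + w * ∑' j, q ^ (m * j) * w ^ j / (1 - q ^ (j + m + 1))
        - w * (1 - q ^ m * w)⁻¹ := by
  have hratio : ‖q ^ m * w‖ < 1 := (norm_pow_mul_le_norm hq.le m w).trans_lt hw
  have hterm : ∀ j, q ^ ((m + 1) * (j + 1)) * w ^ (j + 1) / (1 - q ^ (j + 1 + m))
      = w * (q ^ (m * j) * w ^ j / (1 - q ^ (j + m + 1))) - w * (q ^ m * w) ^ j := fun j => by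
    have hne := one_sub_pow_ne_zero hq (k := j + m + 1) (by omega)
    rw [show j + 1 + m = j + m + 1 by omega]
    field_simp
    ring
  have hR : Summable fun j => q ^ (m * j) * w ^ j / (1 - q ^ (j + m + 1)) := by
    simpa only [← add_assoc] using
      (summable_norm_pow_mul_pow_div_one_sub_pow hq hw hm m.add_one_ne_zero).of_norm
  have hL := (summable_norm_pow_mul_pow_div_one_sub_pow hq hw m.add_one_ne_zero hm).of_norm
  rw [hL.tsum_eq_zero_add, tsum_congr hterm,
    (hR.mul_left w).tsum_sub ((summable_geometric_of_norm_lt_one hratio).mul_left w),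
    tsum_mul_left, tsum_mul_left, tsum_geometric_of_norm_lt_one hratio]
  simp only [mul_zero, pow_zero, zero_add, one_mul, one_div]
  ring

lemma norm_tsum_pow_div_qPC_le (hq : ‖q‖ < 1) (hw : ‖w‖ < 1) {k : ℕ} (hk : k ≠ 0) (r : ℕ) :
    ‖∑' n, q ^ (k * n) / qPC q (q ^ n * w) r‖ ≤ ((1 - ‖w‖) ^ r)⁻¹ * (1 - ‖q‖)⁻¹ := by
  simpa only [pow_mul, div_eq_mul_inv] using
    norm_tsum_pow_pow_mul_le hq hk fun n => norm_inv_qPC_pow_mul_le hq.le hw n r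

lemma summable_pow_mul_tsum_pow_mul_inv_qPC (hq : ‖q‖ < 1) (hw : ‖w‖ < 1) {m : ℕ} (hm : m ≠ 0) :
    Summable fun j =>
      q ^ ((m + 1) * j) * w ^ j * ∑' n, (q ^ (j + m)) ^ n * (qPC q (q ^ (n + 1) * w) m)⁻¹ := by
  have hb : ∀ j, ‖w ^ j * ∑' n, (q ^ (j + m)) ^ n * (qPC q (q ^ (n + 1) * w) m)⁻¹‖
      ≤ ((1 - ‖w‖) ^ m)⁻¹ * (1 - ‖q‖)⁻¹ := fun j =>
    (norm_pow_mul_le_norm hw.le j _).trans <| norm_tsum_pow_pow_mul_le hq (by omega) fun n =>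
      norm_inv_qPC_pow_mul_le hq.le hw (n + 1) m
  simpa only [pow_mul, mul_assoc] using (summable_norm_pow_pow_mul hq m.add_one_ne_zero hb).of_norm

lemma summable_norm_pow_div_qPC (hq : ‖q‖ < 1) (hw : ‖w‖ < 1) {k : ℕ} (hk : k ≠ 0) (r : ℕ) :
    Summable fun n => ‖q ^ (k * n) / qPC q (q ^ n * w) r‖ := by
  simpa only [pow_mul, div_eq_mul_inv] using
    summable_norm_pow_pow_mul hq hk fun n => norm_inv_qPC_pow_mul_le hq.le hw n r

lemma summable_norm_pow_mul_pow_div_one_sub_pow_mul_tsum (hq : ‖q‖ < 1) (hw : ‖w‖ < 1) {m : ℕ}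
    (hm : m ≠ 0) :
    Summable fun j => ‖q ^ ((m + 1) * j) * w ^ j / (1 - q ^ (j + m)) *
      ∑' n, q ^ ((j + m + 1) * n) / qPC q (q ^ n * w) (m + 1)‖ :=
  .of_nonneg_of_le (fun _ => norm_nonneg _)
    (fun j => by
      rw [norm_mul]
      exact mul_le_mul_of_nonneg_left (norm_tsum_pow_div_qPC_le hq hw (by omega) _) (norm_nonneg _))
    ((summable_norm_pow_mul_pow_div_one_sub_pow hq hw m.add_one_ne_zero hm).mul_right _)

lemma mul_pow_mul_pow_div_one_sub_pow_mul_tsum_eq (hq : ‖q‖ < 1) (hw : ‖w‖ < 1) {m : ℕ}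
    (hm : m ≠ 0) (j : ℕ) :
    w * ((1 - q ^ m) * qPC q w m) *
      (q ^ ((m + 1) * j) * w ^ j / (1 - q ^ (j + m)) *
        ∑' n, q ^ ((j + m + 1) * n) / qPC q (q ^ n * w) (m + 1))
      = q ^ ((m + 1) * j) * w ^ j / (1 - q ^ (j + m)) - qPC q w m *
        (q ^ ((m + 1) * j) * w ^ j * ∑' n, (q ^ (j + m)) ^ n * (qPC q (q ^ (n + 1) * w) m)⁻¹) := by
  have hP : qPC q w m ≠ 0 := by simpa using qPC_pow_mul_ne_zero hq.le hw 0 m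
  have hj := one_sub_pow_ne_zero hq (k := j + m) (by omega)
  calc _ = qPC q w m * (q ^ ((m + 1) * j) * w ^ j / (1 - q ^ (j + m))) *
        ((1 - q ^ m) * w * ∑' n, q ^ ((j + m + 1) * n) / qPC q (q ^ n * w) (m + 1)) := by ring
    _ = _ := by
      rw [one_sub_pow_mul_mul_tsum_pow_div_qPC hq hw m (by omega)]
      generalize ∑' n, (q ^ (j + m)) ^ n * (qPC q (q ^ (n + 1) * w) m)⁻¹ = S
      field_simp

theorem one_sub_pow_mul_qPC_mul_tsum_eq (hq : ‖q‖ < 1) (hw : ‖w‖ < 1) {m : ℕ} (hm : m ≠ 0) :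
    (1 - q ^ m) * qPC q w m *
      ∑' j, q ^ ((m + 1) * j) * w ^ j / (1 - q ^ (j + m)) *
        ∑' n, q ^ ((j + m + 1) * n) / qPC q (q ^ n * w) (m + 1)
      = ∑' j, q ^ (m * j) * w ^ j / (1 - q ^ (j + m + 1)) := by
  have hqm := one_sub_pow_ne_zero hq hm
  -- the summation by parts only computes `w` times the left-hand side
  rcases eq_or_ne w 0 with rfl | hw0
  · have hgeo : ‖q ^ (m + 1)‖ < 1 := norm_pow_lt_one_of_ne_zero hq m.add_one_ne_zero
    simp only [zero_pow_eq, mul_ite, ite_div, mul_zero, zero_div, zero_mul, mul_one, ite_mul,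
      tsum_ite_eq, qPC_zero_right, div_one, pow_mul, pow_zero, zero_add]
    rw [tsum_geometric_of_norm_lt_one hgeo]
    field_simp
  refine mul_left_cancel₀ hw0 ?_
  have hPq : qPC q (q * w) m ≠ 0 := by simpa using qPC_pow_mul_ne_zero hq.le hw 1 m
  have hqmw : 1 - q ^ m * w ≠ 0 :=
    one_sub_ne_zero_of_norm_lt_one ((norm_pow_mul_le_norm hq.le m w).trans_lt hw)
  calc w * _ = ∑' j, w * ((1 - q ^ m) * qPC q w m) *
      (q ^ ((m + 1) * j) * w ^ j / (1 - q ^ (j + m)) *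
        ∑' n, q ^ ((j + m + 1) * n) / qPC q (q ^ n * w) (m + 1)) := by
        rw [tsum_mul_left, ← mul_assoc]
    _ = ∑' j, q ^ ((m + 1) * j) * w ^ j / (1 - q ^ (j + m)) - qPC q w m *
        ((1 - q ^ m)⁻¹ * (qPC q (q * w) m)⁻¹) := by
      rw [tsum_congr (mul_pow_mul_pow_div_one_sub_pow_mul_tsum_eq hq hw hm), Summable.tsum_sub
        (summable_norm_pow_mul_pow_div_one_sub_pow hq hw m.add_one_ne_zero hm).of_norm
        ((summable_pow_mul_tsum_pow_mul_inv_qPC hq hw hm).mul_left _), tsum_mul_left,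
        tsum_pow_mul_tsum_pow_mul_inv_qPC hq hw hm,
        ← one_sub_pow_mul_tsum_pow_div_qPC_succ hq hw hm,
        inv_mul_cancel_left₀ hqm]
    _ = w * _ := by
      have hPB : qPC q w m * (1 - q ^ m * w) = (1 - w) * qPC q (q * w) m :=
        (qPC_succ q w m).symm.trans (qPC_succ' q w m)
      rw [tsum_pow_mul_pow_div_one_sub_pow_eq hq hw hm, eq_div_of_mul_eq hqmw hPB]
      generalize qPC q (q * w) m = B at hPq
      field_simp
      ring

end QSeries

/-- For `q ∈ (0,1)`, `|w| < 1`, `m ≥ 1`: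
`(1 − q^m)(w;q)_m Σ_j [q^{(m+1)j} w^j/(1 − q^{j+m})] Σ_n [q^{(j+m+1)n}/(q^n w;q)_{m+1}]
  = Σ_j q^{mj} w^j/(1 − q^{j+m+1})`, with all series converging absolutely. -/
theorem statement11 (q : ℝ) (hq : q ∈ Set.Ioo (0 : ℝ) 1)
    (w : ℂ) (hw : ‖w‖ < 1) (m : ℕ) (hm : 1 ≤ m) :
    (∀ j : ℕ, Summable (fun n : ℕ =>
      ‖(q : ℂ) ^ ((j + m + 1) * n) / qPC (q : ℂ) ((q : ℂ) ^ n * w) (m + 1)‖)) ∧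
    Summable (fun j : ℕ =>
      ‖(q : ℂ) ^ ((m + 1) * j) * w ^ j / (1 - (q : ℂ) ^ (j + m)) *
        ∑' n : ℕ, (q : ℂ) ^ ((j + m + 1) * n) / qPC (q : ℂ) ((q : ℂ) ^ n * w) (m + 1)‖) ∧
    Summable (fun j : ℕ => ‖(q : ℂ) ^ (m * j) * w ^ j / (1 - (q : ℂ) ^ (j + m + 1))‖) ∧
    (1 - (q : ℂ) ^ m) * qPC (q : ℂ) w m *
      ∑' j : ℕ, (q : ℂ) ^ ((m + 1) * j) * w ^ j / (1 - (q : ℂ) ^ (j + m)) *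
        ∑' n : ℕ, (q : ℂ) ^ ((j + m + 1) * n) / qPC (q : ℂ) ((q : ℂ) ^ n * w) (m + 1)
      = ∑' j : ℕ, (q : ℂ) ^ (m * j) * w ^ j / (1 - (q : ℂ) ^ (j + m + 1)) := by
  have hq' : ‖(q : ℂ)‖ < 1 := by
    rw [Complex.norm_real, Real.norm_of_nonneg hq.1.le]
    exact hq.2
  have hm' : m ≠ 0 := by omega
  refine ⟨fun j => summable_norm_pow_div_qPC hq' hw (by omega) _,
    summable_norm_pow_mul_pow_div_one_sub_pow_mul_tsum hq' hw hm', ?_,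
    one_sub_pow_mul_qPC_mul_tsum_eq hq' hw hm'⟩
  simpa only [← add_assoc] using
    summable_norm_pow_mul_pow_div_one_sub_pow hq' hw hm' m.add_one_ne_zero
end
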